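/- arXiv:2311.10843 — 4 statements merged into one kernel-verified Lean document; each statement's English description precedes it below -/
import Mathlib

section
/- Let G be a finitely generated group with word length l. Let V be a complete discrete valuation ring with valuation ν. Define V[G]^† as the set of formal series Σ_{g∈G} x_g δ_g with coefficients x_g ∈ V satisfying ν(x_g) + 1 ≥ c·l(g) for some c > 0 (depending on the series). Then V[G]^† is closed under the convolution product (Σ x_g δ_g)(Σ y_h δ_h) = Σ_{g,h} x_g y_h δ_{gh}; more precisely, if the two factors satisfy the growth condition with constants c_1 and c_2 respectively, the product satisfies it with constant min(c_1, c_2)/2. -/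
open MonoidAlgebra

lemma stmt6_aux {V : Type*} [CommRing V] (ν : V → ℕ)
    (hνadd : ∀ a b : V, min (ν a) (ν b) ≤ ν (a + b) ∨ a + b = 0)
    {α : Type*} (s : Finset α) (f : α → V) (h : s.sum f ≠ 0) :
    ∃ a ∈ s, f a ≠ 0 ∧ ν (f a) ≤ ν (s.sum f) := by
  induction s using Finset.cons_induction with
  | empty => simp at h
  | cons a s ha ih =>
    rw [Finset.sum_cons] at h ⊢
    by_cases h0 : s.sum f = 0
    · rw [h0, add_zero] at h ⊢
      exact ⟨a, Finset.mem_cons_self _ _, h, le_rfl⟩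
    · rcases hνadd (f a) (s.sum f) with hmin | hz
      · by_cases hfa : f a = 0
        · obtain ⟨b, hb, hb0, hble⟩ := ih h0
          refine ⟨b, Finset.mem_cons_of_mem hb, hb0, ?_⟩
          rw [hfa, zero_add]; exact hble
        · rcases le_total (ν (f a)) (ν (s.sum f)) with h1 | h1
          · exact ⟨a, Finset.mem_cons_self _ _, hfa,
              by simpa [min_eq_left h1] using hmin⟩
          · obtain ⟨b, hb, hb0, hble⟩ := ih h0
            exact ⟨b, Finset.mem_cons_of_mem hb, hb0,
              hble.trans (by simpa [min_eq_right h1] using hmin)⟩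
      · exact absurd hz h

/-- Let `V` be a (complete) discrete valuation ring with valuation
`ν` (characterised here by multiplicativity on nonzero elements and the
ultrametric inequality for sums), `G` a finitely generated group with word
length `l` (subadditive), and consider elements of the group algebra whose
coefficients satisfy the dagger growth condition `ν(x_g) + 1 ≥ c·l(g)`.
Then the convolution product of two such elements again satisfies the growth
condition; more precisely, if the factors satisfy it with constants `c₁, c₂ > 0`,
then the product satisfies it with the constant `min c₁ c₂ / 2`. -/
theorem stmt6 {V : Type*} [CommRing V] [IsDomain V] [IsDiscreteValuationRing V]
    {G : Type*} [Group G]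
    (ν : V → ℕ)
    (hν0 : ν 0 = 0)
    (hνmul : ∀ a b : V, a ≠ 0 → b ≠ 0 → ν (a * b) = ν a + ν b)
    (hνadd : ∀ a b : V, min (ν a) (ν b) ≤ ν (a + b) ∨ a + b = 0)
    (l : G → ℕ) (hl : ∀ g h : G, l (g * h) ≤ l g + l h)
    (x y : MonoidAlgebra V G) (c₁ c₂ : ℝ) (hc₁ : 0 < c₁) (hc₂ : 0 < c₂)
    (hx : ∀ g : G, x.coeff g ≠ 0 → c₁ * l g ≤ (ν (x.coeff g) : ℝ) + 1)
    (hy : ∀ g : G, y.coeff g ≠ 0 → c₂ * l g ≤ (ν (y.coeff g) : ℝ) + 1) :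
    ∀ k : G, (x * y).coeff k ≠ 0 →
      (min c₁ c₂ / 2) * l k ≤ (ν ((x * y).coeff k) : ℝ) + 1 := by
  classical
  intro k hk
  have hrw : (x * y).coeff k = ∑ p ∈ x.coeff.support ×ˢ y.coeff.support,
      (if p.1 * p.2 = k then x.coeff p.1 * y.coeff p.2 else 0) := by
    rw [MonoidAlgebra.coeff_mul, Finset.sum_product]
    rfl
  rw [hrw] at hk ⊢
  obtain ⟨p, hp, hp0, hple⟩ := stmt6_aux ν hνadd _ _ hk
  have hcond : p.1 * p.2 = k := by
    by_contra hc; rw [if_neg hc] at hp0; exact hp0 rfl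
  rw [if_pos hcond] at hp0 hple
  have hxg : x.coeff p.1 ≠ 0 := fun h => hp0 (by rw [h, zero_mul])
  have hyh : y.coeff p.2 ≠ 0 := fun h => hp0 (by rw [h, mul_zero])
  have hν : ν (x.coeff p.1 * y.coeff p.2) = ν (x.coeff p.1) + ν (y.coeff p.2) := hνmul _ _ hxg hyh
  set c := min c₁ c₂ with hc
  have hc0 : 0 < c := lt_min hc₁ hc₂
  have h1 : c * l p.1 ≤ (ν (x.coeff p.1) : ℝ) + 1 :=
    le_trans (by gcongr; exact min_le_left _ _) (hx _ hxg)
  have h2 : c * l p.2 ≤ (ν (y.coeff p.2) : ℝ) + 1 :=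
    le_trans (by gcongr; exact min_le_right _ _) (hy _ hyh)
  have hlk : (l k : ℝ) ≤ (l p.1 : ℝ) + l p.2 := by
    rw [← hcond]; exact_mod_cast hl p.1 p.2
  have hνle : (ν (x.coeff p.1 * y.coeff p.2) : ℝ) ≤ (ν (∑ p ∈ x.coeff.support ×ˢ y.coeff.support,
      (if p.1 * p.2 = k then x.coeff p.1 * y.coeff p.2 else 0)) : ℝ) := by exact_mod_cast hple
  have key : c * l k ≤ (ν (x.coeff p.1) : ℝ) + ν (y.coeff p.2) + 2 := by
    calc c * l k ≤ c * ((l p.1 : ℝ) + l p.2) := by gcongr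
    _ = c * l p.1 + c * l p.2 := by ring
    _ ≤ ((ν (x.coeff p.1) : ℝ) + 1) + ((ν (y.coeff p.2) : ℝ) + 1) := add_le_add h1 h2
    _ = (ν (x.coeff p.1) : ℝ) + ν (y.coeff p.2) + 2 := by ring
  have hnn : (0 : ℝ) ≤ (ν (x.coeff p.1) : ℝ) + ν (y.coeff p.2) := by positivity
  have hab : ((ν (x.coeff p.1) : ℝ) + ν (y.coeff p.2)) ≤ (ν (∑ p ∈ x.coeff.support ×ˢ y.coeff.support,
      (if p.1 * p.2 = k then x.coeff p.1 * y.coeff p.2 else 0)) : ℝ) := by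
    exact_mod_cast hν ▸ hple
  linarith [key, hab, hnn]
end

section
/- Let G be a finitely generated group with word length l, V a complete discrete valuation ring with valuation ν, and V[G]^† the dagger completion consisting of series Σ x_g δ_g with ν(x_g) + 1 ≥ c·l(g) for some c > 0. Then the operator U defined on functions φ : G × G → V by (Uφ)(g,h) = φ(gh, g) maps V[G×G]^† (with length l(g,h) = l(g)+l(h)) to itself and is bounded in the sense that it preserves the growth estimates up to a fixed constant; similarly U^{-1}φ(g,h) = φ(h, h^{-1}g) preserves the growth condition. In particular V[G]^† is a symmetric convolution algebra. -/
/-- The growth (dagger) condition with constant `c` for a function on `G × G`,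
with respect to the length `l(g,h) = l(g) + l(h)` and valuation `ν`. -/
def DaggerBound {V G : Type*} [Zero V] (ν : V → ℕ) (l : G → ℕ) (c : ℝ)
    (φ : G × G → V) : Prop :=
  ∀ g h : G, φ (g, h) ≠ 0 → c * ((l g : ℝ) + l h) ≤ (ν (φ (g, h)) : ℝ) + 1

/-- for a finitely generated group `G` with word length `l`
(subadditive and symmetric) and a complete discrete valuation ring `V` with
valuation `ν`, the operators `U φ(g,h) = φ(gh, g)` and `U⁻¹ φ(g,h) = φ(h, h⁻¹g)`
are bounded on `V[G×G]^†`: they preserve the dagger growth conditions up to a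
fixed constant (for each `c > 0` there is `c' > 0` such that any `φ` satisfying
the growth estimate with constant `c` is mapped to a function satisfying it with
constant `c'`). In particular `V[G]^†` is a symmetric convolution algebra. -/
theorem stmt7 {V : Type*} [CommRing V] {G : Type*} [Group G]
    (ν : V → ℕ) (l : G → ℕ)
    (hl : ∀ g h : G, l (g * h) ≤ l g + l h)
    (hlinv : ∀ g : G, l g⁻¹ = l g) :
    (∀ c : ℝ, 0 < c → ∃ c' : ℝ, 0 < c' ∧ ∀ φ : G × G → V,
        DaggerBound ν l c φ →
          DaggerBound ν l c' (fun p : G × G => φ (p.1 * p.2, p.1))) ∧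
    (∀ c : ℝ, 0 < c → ∃ c' : ℝ, 0 < c' ∧ ∀ φ : G × G → V,
        DaggerBound ν l c φ →
          DaggerBound ν l c' (fun p : G × G => φ (p.2, p.2⁻¹ * p.1))) := by
  constructor
  · intro c hc
    refine ⟨c / 2, by linarith, fun φ hφ g h hne => ?_⟩
    have key := hφ (g * h) g hne
    -- l h = l (g⁻¹ * (g * h)) ≤ l g⁻¹ + l (g*h) = l g + l (g*h)
    have h1 : l h ≤ l g + l (g * h) := by
      have := hl g⁻¹ (g * h)
      simpa [hlinv] using this
    have h2 : (l g : ℝ) + l h ≤ 2 * ((l (g * h) : ℝ) + l g) := by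
      have : (l h : ℝ) ≤ (l g : ℝ) + l (g * h) := by exact_mod_cast h1
      linarith
    calc c / 2 * ((l g : ℝ) + l h) ≤ c / 2 * (2 * ((l (g * h) : ℝ) + l g)) := by
          apply mul_le_mul_of_nonneg_left h2 (by linarith)
      _ = c * ((l (g * h) : ℝ) + l g) := by ring
      _ ≤ _ := key
  · intro c hc
    refine ⟨c / 2, by linarith, fun φ hφ g h hne => ?_⟩
    have key := hφ h (h⁻¹ * g) hne
    have h1 : l g ≤ l h + l (h⁻¹ * g) := by
      have := hl h (h⁻¹ * g)
      simpa using this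
    have h2 : (l g : ℝ) + l h ≤ 2 * ((l h : ℝ) + l (h⁻¹ * g)) := by
      have : (l g : ℝ) ≤ (l h : ℝ) + l (h⁻¹ * g) := by exact_mod_cast h1
      linarith
    calc c / 2 * ((l g : ℝ) + l h) ≤ c / 2 * (2 * ((l h : ℝ) + l (h⁻¹ * g))) := by
          apply mul_le_mul_of_nonneg_left h2 (by linarith)
      _ = c * ((l h : ℝ) + l (h⁻¹ * g)) := by ring
      _ ≤ _ := key
end

section
/- Let F be a field, λ ∈ F a unit, and A = F⟨U_1^{±1}, U_2^{±1}⟩/(U_2U_1 − λU_1U_2) the noncommutative torus (twisted group algebra F[ℤ², c] with cocycle c((m_1,n_1),(m_2,n_2)) = λ^{n_1 m_2}). Then the complex of A-bimodules 0 → A⊗A →^{b_2} (A⊗A) ⊕ (A⊗A) →^{b_1} A⊗A →^{b_0} A → 0, with b_2(f⊗g) = (λ f ⊗ U_2 g − f U_2 ⊗ g, −f ⊗ U_1 g + λ f U_1 ⊗ g), b_1(f_1⊗f_2, f_3⊗f_4) = f_1 U_1 ⊗ f_2 − f_1 ⊗ U_1 f_2 + f_3 U_2 ⊗ f_4 − f_3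 ⊗ U_2 f_4, and b_0(f⊗g) = fg, is exact; in particular b_1 ∘ b_2 = 0 and b_0 ∘ b_1 = 0, and it is a free A-bimodule resolution of A of length 2. -/
open TensorProduct

noncomputable section

variable {F : Type*} [Field F] {A : Type*} [Ring A] [Algebra F A]

/-- `b₂(f ⊗ g) = (λ f ⊗ U₂ g − f U₂ ⊗ g, −f ⊗ U₁ g + λ f U₁ ⊗ g)`. -/
def kosB2 (lam : F) (U₁ U₂ : A) :
    A ⊗[F] A →ₗ[F] (A ⊗[F] A) × (A ⊗[F] A) :=
  LinearMap.prod
    (TensorProduct.map (lam • LinearMap.id) (LinearMap.mulLeft F U₂) -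
      TensorProduct.map (LinearMap.mulRight F U₂) LinearMap.id)
    (TensorProduct.map (lam • LinearMap.mulRight F U₁) LinearMap.id -
      TensorProduct.map LinearMap.id (LinearMap.mulLeft F U₁))

/-- `b₁(f₁ ⊗ f₂, f₃ ⊗ f₄) = f₁U₁ ⊗ f₂ − f₁ ⊗ U₁f₂ + f₃U₂ ⊗ f₄ − f₃ ⊗ U₂f₄`. -/
def kosB1 (U₁ U₂ : A) :
    (A ⊗[F] A) × (A ⊗[F] A) →ₗ[F] A ⊗[F] A :=
  LinearMap.coprod
    (TensorProduct.map (LinearMap.mulRight F U₁) LinearMap.id -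
      TensorProduct.map LinearMap.id (LinearMap.mulLeft F U₁))
    (TensorProduct.map (LinearMap.mulRight F U₂) LinearMap.id -
      TensorProduct.map LinearMap.id (LinearMap.mulLeft F U₂))

/-- `b₀(f ⊗ g) = f g`, the multiplication map. -/
def kosB0 : A ⊗[F] A →ₗ[F] A :=
  TensorProduct.lift (LinearMap.mul F A)

namespace Stmt14

variable {F : Type*} [Field F] {A : Type*} [Ring A] [Algebra F A]

/-- scalar `lam ^ k` as an element of `F`. -/
def L (lam : Fˣ) (k : ℤ) : F := ((lam ^ k : Fˣ) : F)

lemma L_mul (lam : Fˣ) (a b : ℤ) : L lam a * L lam b = L lam (a + b) := by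
  rw [L, L, L, ← Units.val_mul, ← zpow_add]

lemma L_zero (lam : Fˣ) : L lam 0 = 1 := by simp [L]

lemma L_one (lam : Fˣ) : L lam 1 = (lam : F) := by simp [L]

lemma L_congr (lam : Fˣ) {a b : ℤ} (h : a = b) : L lam a = L lam b := by rw [h]

section comm

variable (lam : Fˣ) (u₁ u₂ : Aˣ)
  (hrel : (u₂ : A) * u₁ = (lam : F) • ((u₁ : A) * u₂))

include hrel

lemma step_inv : (u₂ : A) * ((u₁⁻¹ : Aˣ) : A) = L lam (-1) • (((u₁⁻¹ : Aˣ) : A) * u₂) := by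
  have h1 : ((u₁⁻¹ : Aˣ) : A) * ((u₂ : A) * (u₁ : A)) * ((u₁⁻¹ : Aˣ) : A)
      = (lam : F) • ((u₂ : A) * ((u₁⁻¹ : Aˣ) : A)) := by
    rw [hrel, mul_smul_comm, smul_mul_assoc]
    congr 1
    calc ((u₁⁻¹ : Aˣ) : A) * ((u₁ : A) * (u₂ : A)) * ((u₁⁻¹ : Aˣ) : A)
        = (((u₁⁻¹ : Aˣ) : A) * (u₁ : A)) * ((u₂ : A) * ((u₁⁻¹ : Aˣ) : A)) := by
          rw [mul_assoc, mul_assoc, mul_assoc]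
      _ = (u₂ : A) * ((u₁⁻¹ : Aˣ) : A) := by rw [Units.inv_mul, one_mul]
  have h2 : ((u₁⁻¹ : Aˣ) : A) * ((u₂ : A) * (u₁ : A)) * ((u₁⁻¹ : Aˣ) : A)
      = ((u₁⁻¹ : Aˣ) : A) * (u₂ : A) := by
    rw [← mul_assoc, mul_assoc (((u₁⁻¹ : Aˣ) : A) * (u₂ : A)), Units.mul_inv, mul_one]
  rw [h2] at h1
  rw [h1, L, zpow_neg, zpow_one, smul_smul]
  simp

lemma step_pow (m : ℤ) :
    (u₂ : A) * ((u₁ ^ m : Aˣ) : A) = L lam m • (((u₁ ^ m : Aˣ) : A) * u₂) := by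
  induction m using Int.induction_on with
  | zero => simp [L]
  | succ n ih =>
      have hz : ((u₁ ^ ((n : ℤ) + 1) : Aˣ) : A) = ((u₁ ^ (n : ℤ) : Aˣ) : A) * (u₁ : A) := by
        rw [zpow_add_one, Units.val_mul]
      calc (u₂ : A) * ((u₁ ^ ((n : ℤ) + 1) : Aˣ) : A)
          = ((u₂ : A) * ((u₁ ^ (n : ℤ) : Aˣ) : A)) * (u₁ : A) := by rw [hz, mul_assoc]
        _ = (L lam (n : ℤ) • (((u₁ ^ (n : ℤ) : Aˣ) : A) * (u₂ : A))) * (u₁ : A) := by rw [ih]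
        _ = L lam (n : ℤ) • (((u₁ ^ (n : ℤ) : Aˣ) : A) * ((u₂ : A) * (u₁ : A))) := by
            rw [smul_mul_assoc, mul_assoc]
        _ = L lam (n : ℤ) • (((u₁ ^ (n : ℤ) : Aˣ) : A) * (L lam 1 • ((u₁ : A) * (u₂ : A)))) := by
            rw [hrel, L_one]
        _ = (L lam (n : ℤ) * L lam 1) • ((((u₁ ^ (n : ℤ) : Aˣ) : A) * (u₁ : A)) * (u₂ : A)) := by
            rw [mul_smul_comm, smul_smul, mul_assoc]
        _ = L lam ((n : ℤ) + 1) • (((u₁ ^ ((n : ℤ) + 1) : Aˣ) : A) * (u₂ : A)) := by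
            rw [L_mul, hz]
  | pred n ih =>
      have hz : ((u₁ ^ (-(n : ℤ) - 1) : Aˣ) : A) = ((u₁ ^ (-(n : ℤ)) : Aˣ) : A) * ((u₁⁻¹ : Aˣ) : A) := by
        rw [zpow_sub_one, Units.val_mul]
      calc (u₂ : A) * ((u₁ ^ (-(n : ℤ) - 1) : Aˣ) : A)
          = ((u₂ : A) * ((u₁ ^ (-(n : ℤ)) : Aˣ) : A)) * ((u₁⁻¹ : Aˣ) : A) := by rw [hz, mul_assoc]
        _ = (L lam (-(n : ℤ)) • (((u₁ ^ (-(n : ℤ)) : Aˣ) : A) * (u₂ : A))) * ((u₁⁻¹ : Aˣ) : A) := by rw [ih]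
        _ = L lam (-(n : ℤ)) • (((u₁ ^ (-(n : ℤ)) : Aˣ) : A) * ((u₂ : A) * ((u₁⁻¹ : Aˣ) : A))) := by
            rw [smul_mul_assoc, mul_assoc]
        _ = L lam (-(n : ℤ)) • (((u₁ ^ (-(n : ℤ)) : Aˣ) : A) * (L lam (-1) • (((u₁⁻¹ : Aˣ) : A) * (u₂ : A)))) := by
            rw [step_inv lam u₁ u₂ hrel]
        _ = (L lam (-(n : ℤ)) * L lam (-1)) • ((((u₁ ^ (-(n : ℤ)) : Aˣ) : A) * ((u₁⁻¹ : Aˣ) : A)) * (u₂ : A)) := by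
            rw [mul_smul_comm, smul_smul, mul_assoc]
        _ = L lam (-(n : ℤ) - 1) • (((u₁ ^ (-(n : ℤ) - 1) : Aˣ) : A) * (u₂ : A)) := by
            rw [L_mul, hz, L_congr lam (by ring : -(n : ℤ) + -1 = -(n : ℤ) - 1)]

lemma step_pow_inv (m : ℤ) :
    ((u₂⁻¹ : Aˣ) : A) * ((u₁ ^ m : Aˣ) : A)
      = L lam (-m) • (((u₁ ^ m : Aˣ) : A) * ((u₂⁻¹ : Aˣ) : A)) := by
  set X : A := ((u₁ ^ m : Aˣ) : A)
  have h1 := step_pow lam u₁ u₂ hrel m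
  have h2 : ((u₂⁻¹ : Aˣ) : A) * ((u₂ : A) * X) * ((u₂⁻¹ : Aˣ) : A)
      = X * ((u₂⁻¹ : Aˣ) : A) := by
    rw [← mul_assoc, Units.inv_mul, one_mul]
  rw [h1] at h2
  have h3 : ((u₂⁻¹ : Aˣ) : A) * (L lam m • (X * (u₂ : A))) * ((u₂⁻¹ : Aˣ) : A)
      = L lam m • (((u₂⁻¹ : Aˣ) : A) * X) := by
    rw [mul_smul_comm, smul_mul_assoc]
    congr 1
    rw [mul_assoc, mul_assoc, Units.mul_inv, mul_one]
  rw [h3] at h2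
  rw [← h2, smul_smul, L_mul, L_congr lam (by ring : -m + m = 0), L_zero, one_smul]

lemma key_comm (m n : ℤ) :
    ((u₂ ^ n : Aˣ) : A) * ((u₁ ^ m : Aˣ) : A)
      = L lam (n * m) • (((u₁ ^ m : Aˣ) : A) * ((u₂ ^ n : Aˣ) : A)) := by
  induction n using Int.induction_on with
  | zero => simp [L]
  | succ n ih =>
      have hz : ((u₂ ^ ((n : ℤ) + 1) : Aˣ) : A) = ((u₂ ^ (n : ℤ) : Aˣ) : A) * (u₂ : A) := by
        rw [zpow_add_one, Units.val_mul]
      calc ((u₂ ^ ((n : ℤ) + 1) : Aˣ) : A) * ((u₁ ^ m : Aˣ) : A)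
          = ((u₂ ^ (n : ℤ) : Aˣ) : A) * ((u₂ : A) * ((u₁ ^ m : Aˣ) : A)) := by
            rw [hz, mul_assoc]
        _ = ((u₂ ^ (n : ℤ) : Aˣ) : A) * (L lam m • (((u₁ ^ m : Aˣ) : A) * (u₂ : A))) := by
            rw [step_pow lam u₁ u₂ hrel]
        _ = L lam m • ((((u₂ ^ (n : ℤ) : Aˣ) : A) * ((u₁ ^ m : Aˣ) : A)) * (u₂ : A)) := by
            rw [mul_smul_comm, mul_assoc]
        _ = L lam m • ((L lam ((n : ℤ) * m) • (((u₁ ^ m : Aˣ) : A) * ((u₂ ^ (n : ℤ) : Aˣ) : A))) * (u₂ : A)) := by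
            rw [ih]
        _ = (L lam m * L lam ((n : ℤ) * m)) • (((u₁ ^ m : Aˣ) : A) * (((u₂ ^ (n : ℤ) : Aˣ) : A) * (u₂ : A))) := by
            rw [smul_mul_assoc, smul_smul, mul_assoc]
        _ = L lam (((n : ℤ) + 1) * m) • (((u₁ ^ m : Aˣ) : A) * ((u₂ ^ ((n : ℤ) + 1) : Aˣ) : A)) := by
            rw [L_mul, hz, L_congr lam (by ring : m + (n : ℤ) * m = ((n : ℤ) + 1) * m)]
  | pred n ih =>
      have hz : ((u₂ ^ (-(n : ℤ) - 1) : Aˣ) : A) = ((u₂ ^ (-(n : ℤ)) : Aˣ) : A) * ((u₂⁻¹ : Aˣ) : A) := by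
        rw [zpow_sub_one, Units.val_mul]
      calc ((u₂ ^ (-(n : ℤ) - 1) : Aˣ) : A) * ((u₁ ^ m : Aˣ) : A)
          = ((u₂ ^ (-(n : ℤ)) : Aˣ) : A) * (((u₂⁻¹ : Aˣ) : A) * ((u₁ ^ m : Aˣ) : A)) := by
            rw [hz, mul_assoc]
        _ = ((u₂ ^ (-(n : ℤ)) : Aˣ) : A) * (L lam (-m) • (((u₁ ^ m : Aˣ) : A) * ((u₂⁻¹ : Aˣ) : A))) := by
            rw [step_pow_inv lam u₁ u₂ hrel]
        _ = L lam (-m) • ((((u₂ ^ (-(n : ℤ)) : Aˣ) : A) * ((u₁ ^ m : Aˣ) : A)) * ((u₂⁻¹ : Aˣ) : A)) := by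
            rw [mul_smul_comm, mul_assoc]
        _ = L lam (-m) • ((L lam (-(n : ℤ) * m) • (((u₁ ^ m : Aˣ) : A) * ((u₂ ^ (-(n : ℤ)) : Aˣ) : A))) * ((u₂⁻¹ : Aˣ) : A)) := by
            rw [ih]
        _ = (L lam (-m) * L lam (-(n : ℤ) * m)) • (((u₁ ^ m : Aˣ) : A) * (((u₂ ^ (-(n : ℤ)) : Aˣ) : A) * ((u₂⁻¹ : Aˣ) : A))) := by
            rw [smul_mul_assoc, smul_smul, mul_assoc]
        _ = L lam ((-(n : ℤ) - 1) * m) • (((u₁ ^ m : Aˣ) : A) * ((u₂ ^ (-(n : ℤ) - 1) : Aˣ) : A)) := by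
            rw [L_mul, hz, L_congr lam (by ring : -m + -(n : ℤ) * m = (-(n : ℤ) - 1) * m)]

end comm

section bas

variable (lam : Fˣ) (u₁ u₂ : Aˣ)
  (hrel : (u₂ : A) * u₁ = (lam : F) • ((u₁ : A) * u₂))
  (bas : Module.Basis (ℤ × ℤ) F A)
  (hbas : ∀ p : ℤ × ℤ, bas p = ((u₁ ^ p.1 * u₂ ^ p.2 : Aˣ) : A))

include hrel hbas

lemma bas_mul (p q : ℤ × ℤ) :
    bas p * bas q = L lam (p.2 * q.1) • bas (p.1 + q.1, p.2 + q.2) := by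
  rw [hbas p, hbas q, hbas (p.1 + q.1, p.2 + q.2)]
  rw [Units.val_mul, Units.val_mul, Units.val_mul]
  calc ((u₁ ^ p.1 : Aˣ) : A) * ((u₂ ^ p.2 : Aˣ) : A) * (((u₁ ^ q.1 : Aˣ) : A) * ((u₂ ^ q.2 : Aˣ) : A))
      = ((u₁ ^ p.1 : Aˣ) : A) * (((u₂ ^ p.2 : Aˣ) : A) * ((u₁ ^ q.1 : Aˣ) : A)) * ((u₂ ^ q.2 : Aˣ) : A) := by
        rw [mul_assoc, mul_assoc, mul_assoc]
    _ = L lam (p.2 * q.1) • (((u₁ ^ p.1 : Aˣ) : A) * ((u₁ ^ q.1 : Aˣ) : A) * (((u₂ ^ p.2 : Aˣ) : A) * ((u₂ ^ q.2 : Aˣ) : A))) := by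
        rw [key_comm lam u₁ u₂ hrel q.1 p.2, mul_smul_comm, smul_mul_assoc]
        congr 1
        rw [mul_assoc, mul_assoc, mul_assoc]
    _ = L lam (p.2 * q.1) • (((u₁ ^ (p.1 + q.1) : Aˣ) : A) * ((u₂ ^ (p.2 + q.2) : Aˣ) : A)) := by
        rw [← Units.val_mul, ← Units.val_mul, ← zpow_add, ← zpow_add]

end bas

section model
variable (F : Type*) [Field F]

/-- geometric-sum function. -/
def g0 (m : ℤ) : ℤ →₀ F :=
  if 0 ≤ m then -(∑ k ∈ Finset.range m.toNat, Finsupp.single (k : ℤ) 1)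
  else ∑ k ∈ Finset.range (-m).toNat, Finsupp.single (m + (k : ℤ)) 1

lemma g0_of_nonneg {m : ℤ} (hm : 0 ≤ m) :
    g0 F m = -(∑ k ∈ Finset.range m.toNat, Finsupp.single ((k : ℤ)) (1:F)) := by
  unfold g0; rw [if_pos hm]

lemma g0_of_neg {m : ℤ} (hm : ¬ 0 ≤ m) :
    g0 F m = ∑ k ∈ Finset.range (-m).toNat, Finsupp.single (m + (k : ℤ)) (1:F) := by
  unfold g0; rw [if_neg hm]

lemma g0_sub (m : ℤ) : g0 F m - g0 F (m + 1) = Finsupp.single m 1 := by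
  rcases le_or_gt 0 m with hm | hm
  · have h1 : (0 : ℤ) ≤ m + 1 := by omega
    have h2 : (m + 1).toNat = m.toNat + 1 := by omega
    have h3 : ((m.toNat : ℤ)) = m := by omega
    rw [g0_of_nonneg F hm, g0_of_nonneg F h1, h2, Finset.sum_range_succ, h3]
    abel
  · have h0 : ¬ (0:ℤ) ≤ m := by omega
    rcases eq_or_ne m (-1) with he | hne
    · subst he
      rw [g0_of_neg F h0, g0_of_nonneg F (by norm_num : (0:ℤ) ≤ -1 + 1)]
      norm_num
    · have h1 : ¬ (0:ℤ) ≤ m + 1 := by omega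
      have h2 : (-m).toNat = (-(m+1)).toNat + 1 := by omega
      rw [g0_of_neg F h0, g0_of_neg F h1, h2, Finset.sum_range_succ']
      have h3 : ∀ k : ℕ, Finsupp.single ((m + ((k+1 : ℕ) : ℤ)) : ℤ) (1:F)
          = Finsupp.single (m + 1 + (k:ℤ)) 1 := by
        intro k; congr 1; push_cast; ring
      rw [Finset.sum_congr rfl (fun k _ => h3 k)]
      have h4 : (m + ((0:ℕ) : ℤ)) = m := by norm_num
      rw [h4]
      abel

lemma g0_shift (m : ℤ) :
    Finsupp.lmapDomain F F (fun k : ℤ => k + 1) (g0 F m)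
      = g0 F m - Finsupp.single m 1 + Finsupp.single 0 1 := by
  rcases le_or_gt 0 m with hm | hm
  · have h3 : ((m.toNat : ℤ)) = m := by omega
    rw [g0_of_nonneg F hm, map_neg, map_sum]
    have h5 : ∀ k : ℕ, Finsupp.lmapDomain F F (fun k : ℤ => k + 1) (Finsupp.single (k : ℤ) 1)
        = Finsupp.single (((k+1 : ℕ) : ℤ)) (1:F) := by
      intro k
      rw [Finsupp.lmapDomain_apply, Finsupp.mapDomain_single]
      congr 1 <;> (push_cast; ring)
    rw [Finset.sum_congr rfl (fun k _ => h5 k)]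
    have h6 : ∑ k ∈ Finset.range m.toNat, Finsupp.single (((k+1 : ℕ) : ℤ)) (1:F)
        = (∑ k ∈ Finset.range m.toNat, Finsupp.single ((k:ℕ) : ℤ) 1)
            + Finsupp.single ((m.toNat : ℕ) : ℤ) 1 - Finsupp.single ((0:ℕ) : ℤ) 1 := by
      have := Finset.sum_range_succ' (fun k : ℕ => Finsupp.single ((k : ℕ) : ℤ) (1:F)) m.toNat
      rw [Finset.sum_range_succ] at this
      rw [eq_sub_iff_add_eq]
      exact this.symm
    rw [h6, h3]
    push_cast
    abel
  · have h0 : ¬ (0:ℤ) ≤ m := by omega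
    rw [g0_of_neg F h0, map_sum]
    have h5 : ∀ k : ℕ, Finsupp.lmapDomain F F (fun k : ℤ => k + 1) (Finsupp.single (m + (k : ℤ)) 1)
        = Finsupp.single (m + (((k+1 : ℕ) : ℤ))) (1:F) := by
      intro k
      rw [Finsupp.lmapDomain_apply, Finsupp.mapDomain_single]
      congr 1 <;> (push_cast; ring)
    rw [Finset.sum_congr rfl (fun k _ => h5 k)]
    have h6 : ∑ k ∈ Finset.range (-m).toNat, Finsupp.single (m + (((k+1 : ℕ) : ℤ))) (1:F)
        = (∑ k ∈ Finset.range (-m).toNat, Finsupp.single (m + ((k:ℕ) : ℤ)) 1)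
            + Finsupp.single (m + (((-m).toNat : ℕ) : ℤ)) 1 - Finsupp.single (m + ((0:ℕ) : ℤ)) 1 := by
      have := Finset.sum_range_succ' (fun k : ℕ => Finsupp.single (m + ((k : ℕ) : ℤ)) (1:F)) (-m).toNat
      rw [Finset.sum_range_succ] at this
      rw [eq_sub_iff_add_eq]
      exact this.symm
    rw [h6]
    have h7 : m + (((-m).toNat : ℕ) : ℤ) = 0 := by omega
    have h8 : m + ((0:ℕ) : ℤ) = m := by norm_num
    rw [h7, h8]
    abel

abbrev II : Type := (ℤ × ℤ) × (ℤ × ℤ)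
abbrev VV := II →₀ F
abbrev WW := (ℤ × ℤ) →₀ F

/-- shift `q₁ ↦ q₁ + 1`. -/
def T1 : VV F →ₗ[F] VV F := Finsupp.lmapDomain F F (fun x : II => (x.1, (x.2.1 + 1, x.2.2)))
/-- shift `q₂ ↦ q₂ + 1`. -/
def T2 : VV F →ₗ[F] VV F := Finsupp.lmapDomain F F (fun x : II => (x.1, (x.2.1, x.2.2 + 1)))
/-- projection `q₁ ↦ 0`. -/
def S1 : VV F →ₗ[F] VV F := Finsupp.lmapDomain F F (fun x : II => (x.1, (0, x.2.2)))
/-- augmentation. -/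
def Emap : VV F →ₗ[F] WW F := Finsupp.lmapDomain F F (fun x : II => x.1)
/-- section of the augmentation. -/
def sigma : WW F →ₗ[F] VV F := Finsupp.lmapDomain F F (fun r : ℤ × ℤ => (r, ((0:ℤ), (0:ℤ))))

/-- first-variable geometric sum vector. -/
def gv1 : II → VV F := fun x => Finsupp.lmapDomain F F (fun k : ℤ => (x.1, (k, x.2.2))) (g0 F x.2.1)
/-- second-variable geometric sum vector. -/
def gv2 : II → VV F := fun x => Finsupp.lmapDomain F F (fun k : ℤ => (x.1, (x.2.1, k))) (g0 F x.2.2)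

def H1 : VV F →ₗ[F] VV F := Finsupp.linearCombination F (gv1 F)
def H2 : VV F →ₗ[F] VV F := Finsupp.linearCombination F (gv2 F)

def d2m : VV F →ₗ[F] VV F × VV F := LinearMap.prod (T2 F - LinearMap.id) (LinearMap.id - T1 F)
def d1m : VV F × VV F →ₗ[F] VV F := LinearMap.coprod (LinearMap.id - T1 F) (LinearMap.id - T2 F)
def h0m : VV F →ₗ[F] VV F × VV F := LinearMap.prod (H1 F) ((S1 F) ∘ₗ (H2 F))
def h1m : VV F × VV F →ₗ[F] VV F := (H1 F) ∘ₗ (LinearMap.snd F (VV F) (VV F))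

-- basic evaluation lemmas
lemma T1_single (x : II) (c : F) :
    T1 F (Finsupp.single x c) = Finsupp.single (x.1, (x.2.1 + 1, x.2.2)) c := by
  rw [T1, Finsupp.lmapDomain_apply, Finsupp.mapDomain_single]

lemma T2_single (x : II) (c : F) :
    T2 F (Finsupp.single x c) = Finsupp.single (x.1, (x.2.1, x.2.2 + 1)) c := by
  rw [T2, Finsupp.lmapDomain_apply, Finsupp.mapDomain_single]

lemma S1_single (x : II) (c : F) :
    S1 F (Finsupp.single x c) = Finsupp.single (x.1, (0, x.2.2)) c := by
  rw [S1, Finsupp.lmapDomain_apply, Finsupp.mapDomain_single]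

lemma Emap_single (x : II) (c : F) :
    Emap F (Finsupp.single x c) = Finsupp.single x.1 c := by
  rw [Emap, Finsupp.lmapDomain_apply, Finsupp.mapDomain_single]

lemma sigma_single (r : ℤ × ℤ) (c : F) :
    sigma F (Finsupp.single r c) = Finsupp.single (r, ((0:ℤ),(0:ℤ))) c := by
  rw [sigma, Finsupp.lmapDomain_apply, Finsupp.mapDomain_single]

lemma H1_single (x : II) : H1 F (Finsupp.single x 1) = gv1 F x := by
  rw [H1, Finsupp.linearCombination_single, one_smul]

lemma H2_single (x : II) : H2 F (Finsupp.single x 1) = gv2 F x := by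
  rw [H2, Finsupp.linearCombination_single, one_smul]

-- P-lemmas
lemma comp_lmap {α β γ : Type*} (f : α → β) (g : β → γ) (v : α →₀ F) :
    Finsupp.lmapDomain F F g (Finsupp.lmapDomain F F f v)
      = Finsupp.lmapDomain F F (g ∘ f) v := by
  simp [Finsupp.lmapDomain_apply, ← Finsupp.mapDomain_comp]

lemma PA2 (r : ℤ × ℤ) (m n : ℤ) :
    gv1 F (r, (m, n)) - gv1 F (r, (m + 1, n)) = Finsupp.single (r, (m, n)) 1 := by
  rw [gv1, gv1]
  dsimp only
  rw [← map_sub, g0_sub, Finsupp.lmapDomain_apply, Finsupp.mapDomain_single]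

lemma PB2 (r : ℤ × ℤ) (m n : ℤ) :
    gv2 F (r, (m, n)) - gv2 F (r, (m, n + 1)) = Finsupp.single (r, (m, n)) 1 := by
  rw [gv2, gv2]
  dsimp only
  rw [← map_sub, g0_sub, Finsupp.lmapDomain_apply, Finsupp.mapDomain_single]

lemma PA1 (r : ℤ × ℤ) (m n : ℤ) :
    T1 F (gv1 F (r, (m, n)))
      = gv1 F (r, (m, n)) - Finsupp.single (r, (m, n)) 1 + Finsupp.single (r, (0, n)) 1 := by
  rw [gv1, T1]
  dsimp only
  rw [comp_lmap]
  have hfe : ((fun x : II => (x.1, (x.2.1 + 1, x.2.2))) ∘ (fun k : ℤ => (r, (k, n))))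
      = (fun k : ℤ => (r, (k, n))) ∘ (fun k : ℤ => k + 1) := rfl
  rw [hfe, ← comp_lmap, g0_shift]
  rw [map_add, map_sub]
  simp only [Finsupp.lmapDomain_apply, Finsupp.mapDomain_single]

lemma PB1 (r : ℤ × ℤ) (m n : ℤ) :
    T2 F (gv2 F (r, (m, n)))
      = gv2 F (r, (m, n)) - Finsupp.single (r, (m, n)) 1 + Finsupp.single (r, (m, 0)) 1 := by
  rw [gv2, T2]
  dsimp only
  rw [comp_lmap]
  have hfe : ((fun x : II => (x.1, (x.2.1, x.2.2 + 1))) ∘ (fun k : ℤ => (r, (m, k))))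
      = (fun k : ℤ => (r, (m, k))) ∘ (fun k : ℤ => k + 1) := rfl
  rw [hfe, ← comp_lmap, g0_shift]
  rw [map_add, map_sub]
  simp only [Finsupp.lmapDomain_apply, Finsupp.mapDomain_single]

lemma PC1 (r : ℤ × ℤ) (m n : ℤ) : S1 F (gv2 F (r, (m, n))) = gv2 F (r, (0, n)) := by
  rw [gv2, gv2, S1]
  dsimp only
  rw [comp_lmap]
  rfl

lemma PC2 (r : ℤ × ℤ) (m n : ℤ) : T1 F (gv2 F (r, (m, n))) = gv2 F (r, (m + 1, n)) := by
  rw [gv2, gv2, T1]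
  dsimp only
  rw [comp_lmap]
  rfl

lemma PC3 (r : ℤ × ℤ) (m n : ℤ) : T2 F (gv1 F (r, (m, n))) = gv1 F (r, (m, n + 1)) := by
  rw [gv1, gv1, T2]
  dsimp only
  rw [comp_lmap]
  rfl

-- model homotopy identities
lemma M1 : (Emap F) ∘ₗ (sigma F) = LinearMap.id := by
  ext r : 2
  simp only [LinearMap.comp_apply, LinearMap.id_apply, Finsupp.lsingle_apply,
    sigma_single, Emap_single]

lemma M2 : (sigma F) ∘ₗ (Emap F) + (d1m F) ∘ₗ (h0m F) = LinearMap.id := by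
  ext x : 2
  obtain ⟨r, m, n⟩ := x
  simp only [LinearMap.add_apply, LinearMap.comp_apply, LinearMap.id_apply, d1m, h0m,
    LinearMap.prod_apply, Function.prod_apply, LinearMap.coprod_apply, LinearMap.sub_apply,
    Finsupp.lsingle_apply, Emap_single, sigma_single, H1_single, H2_single]
  rw [PC1, PA1, PB1]
  abel

lemma M3 : (h0m F) ∘ₗ (d1m F) + (d2m F) ∘ₗ (h1m F) = LinearMap.id := by
  ext x : 3
  · obtain ⟨r, m, n⟩ := x
    simp only [LinearMap.add_apply, LinearMap.comp_apply, LinearMap.id_apply, d1m, h0m, d2m, h1m,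
      LinearMap.prod_apply, Function.prod_apply, LinearMap.coprod_apply, LinearMap.sub_apply,
      LinearMap.inl_apply, LinearMap.snd_apply, Finsupp.lsingle_apply, map_zero,
      map_sub, add_zero, zero_sub, sub_zero]
    rw [T1_single]
    dsimp only
    rw [H1_single, H1_single, H2_single, H2_single, PC1, PC1, Prod.mk_sub_mk, PA2]
    simp
  · obtain ⟨r, m, n⟩ := x
    simp only [LinearMap.add_apply, LinearMap.comp_apply, LinearMap.id_apply, d1m, h0m, d2m, h1m,
      LinearMap.prod_apply, Function.prod_apply, LinearMap.coprod_apply, LinearMap.sub_apply,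
      LinearMap.inr_apply, LinearMap.snd_apply, Finsupp.lsingle_apply, map_zero,
      map_sub, add_zero, zero_add, zero_sub, sub_zero]
    rw [T2_single]
    dsimp only
    rw [H1_single, H1_single, H2_single, H2_single]
    have hb := PB2 F r m n
    have hS : (S1 F) (gv2 F ((r, (m, n)) : II)) - (S1 F) (gv2 F ((r, (m, n + 1)) : II))
        = Finsupp.single ((r, (0, n)) : II) 1 := by
      rw [← map_sub, hb, S1_single]
    rw [PA1, PC3]
    refine Prod.ext ?_ ?_
    · simp only [Prod.fst_add, Prod.fst_sub]
      abel
    · simp only [Prod.snd_add, Prod.snd_sub]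
      rw [hS]
      abel

lemma M4 : (h1m F) ∘ₗ (d2m F) = LinearMap.id := by
  ext x : 2
  obtain ⟨r, m, n⟩ := x
  simp only [LinearMap.comp_apply, LinearMap.id_apply, d2m, h1m, LinearMap.prod_apply, Function.prod_apply,
    LinearMap.snd_apply, LinearMap.sub_apply, Finsupp.lsingle_apply, map_sub]
  rw [T1_single]
  dsimp only
  rw [H1_single, H1_single, PA2]

lemma M5 : (d1m F) ∘ₗ (d2m F) = 0 := by
  ext x : 2
  obtain ⟨r, m, n⟩ := x
  simp only [LinearMap.comp_apply, LinearMap.zero_apply, d1m, d2m, LinearMap.prod_apply, Function.prod_apply,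
    LinearMap.coprod_apply, LinearMap.sub_apply, LinearMap.id_apply, Finsupp.lsingle_apply,
    map_sub]
  rw [T1_single, T2_single]
  dsimp only
  rw [T1_single, T2_single]
  dsimp only
  abel

lemma M6 : (Emap F) ∘ₗ (d1m F) = 0 := by
  ext x : 3
  · obtain ⟨r, m, n⟩ := x
    simp only [LinearMap.comp_apply, LinearMap.zero_apply, d1m, LinearMap.coprod_apply,
      LinearMap.sub_apply, LinearMap.id_apply, LinearMap.inl_apply, Finsupp.lsingle_apply,
      map_zero, add_zero, map_sub]
    rw [T1_single, Emap_single, Emap_single]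
    abel
  · obtain ⟨r, m, n⟩ := x
    simp only [LinearMap.comp_apply, LinearMap.zero_apply, d1m, LinearMap.coprod_apply,
      LinearMap.sub_apply, LinearMap.id_apply, LinearMap.inr_apply, Finsupp.lsingle_apply,
      map_zero, zero_add, map_sub]
    rw [T2_single, Emap_single, Emap_single]
    abel

end model

section bases

variable (lam : Fˣ) (u₁ u₂ : Aˣ) (bas : Module.Basis (ℤ × ℤ) F A)

/-- reindexing `(p, q) ↦ (p + q + c, q)`. -/
def shiftEquiv (c : ℤ × ℤ) : II ≃ II where
  toFun x := ((x.1.1 + x.2.1 + c.1, x.1.2 + x.2.2 + c.2), x.2)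
  invFun y := ((y.1.1 - y.2.1 - c.1, y.1.2 - y.2.2 - c.2), y.2)
  left_inv x := by
    obtain ⟨⟨a, b⟩, ⟨u, v⟩⟩ := x
    refine Prod.ext (Prod.ext ?_ ?_) rfl <;> dsimp only <;> ring
  right_inv y := by
    obtain ⟨⟨a, b⟩, ⟨u, v⟩⟩ := y
    refine Prod.ext (Prod.ext ?_ ?_) rfl <;> dsimp only <;> ring

/-- rescaled reindexed basis of `A ⊗ A`. -/
def basArr (c : ℤ × ℤ) (e : II → ℤ) : Module.Basis II F (A ⊗[F] A) :=
  ((bas.tensorProduct bas).reindex (shiftEquiv c)).unitsSMul (fun x => lam ^ e x)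

lemma basArr_apply (c : ℤ × ℤ) (e : II → ℤ) (x : II) :
    basArr lam bas c e x
      = L lam (e x) • (bas (x.1.1 - x.2.1 - c.1, x.1.2 - x.2.2 - c.2) ⊗ₜ[F] bas x.2) := by
  rw [basArr, Module.Basis.unitsSMul_apply, Module.Basis.reindex_apply]
  have : (shiftEquiv c).symm x = ((x.1.1 - x.2.1 - c.1, x.1.2 - x.2.2 - c.2), x.2) := rfl
  rw [this, Module.Basis.tensorProduct_apply, Units.smul_def]
  rfl

def E0exp : II → ℤ := fun x => -(x.1.2 - x.2.2) * x.2.1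
def E1exp : II → ℤ := fun x => (x.2.2 - x.1.2) * (1 + x.2.1)
def E2exp : II → ℤ := fun x => -x.2.1 * (x.1.2 - x.2.2)

def bas0 : Module.Basis II F (A ⊗[F] A) := basArr lam bas ((0 : ℤ), (0 : ℤ)) (E0exp)
def bas1 : Module.Basis II F (A ⊗[F] A) := basArr lam bas ((1 : ℤ), (0 : ℤ)) (E1exp)
def bas2 : Module.Basis II F (A ⊗[F] A) := basArr lam bas ((0 : ℤ), (1 : ℤ)) (E2exp)
def basT : Module.Basis II F (A ⊗[F] A) := basArr lam bas ((1 : ℤ), (1 : ℤ)) (E1exp)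

/-- congruence helper. -/
lemma stc {a b : ℤ} {p p' q q' : ℤ × ℤ} (ha : a = b) (hp : p = p') (hq : q = q') :
    L lam a • (bas p ⊗ₜ[F] bas q) = L lam b • (bas p' ⊗ₜ[F] bas q') := by
  subst ha hp hq; rfl

section withrel

variable (hrel : (u₂ : A) * u₁ = (lam : F) • ((u₁ : A) * u₂))
  (hbas : ∀ p : ℤ × ℤ, bas p = ((u₁ ^ p.1 * u₂ ^ p.2 : Aˣ) : A))

include hrel hbas

lemma bas_mul_u1 (p : ℤ × ℤ) :
    bas p * (u₁ : A) = L lam p.2 • bas (p.1 + 1, p.2) := by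
  have h1 : (u₁ : A) = bas ((1 : ℤ), (0 : ℤ)) := by rw [hbas]; simp
  rw [h1, bas_mul lam u₁ u₂ hrel bas hbas p ((1 : ℤ), (0 : ℤ))]
  rw [L_congr lam (by ring : p.2 * (1:ℤ) = p.2)]
  congr 2 <;> ring

lemma u1_mul_bas (q : ℤ × ℤ) : (u₁ : A) * bas q = bas (q.1 + 1, q.2) := by
  have h1 : (u₁ : A) = bas ((1 : ℤ), (0 : ℤ)) := by rw [hbas]; simp
  rw [h1, bas_mul lam u₁ u₂ hrel bas hbas ((1 : ℤ), (0 : ℤ)) q]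
  rw [L_congr lam (by ring : (0 : ℤ) * q.1 = 0), L_zero, one_smul]
  congr 1 <;> ring

lemma bas_mul_u2 (p : ℤ × ℤ) : bas p * (u₂ : A) = bas (p.1, p.2 + 1) := by
  have h1 : (u₂ : A) = bas ((0 : ℤ), (1 : ℤ)) := by rw [hbas]; simp
  rw [h1, bas_mul lam u₁ u₂ hrel bas hbas p ((0 : ℤ), (1 : ℤ))]
  rw [L_congr lam (by ring : p.2 * (0:ℤ) = 0), L_zero, one_smul]
  congr 1 <;> ring

lemma u2_mul_bas (q : ℤ × ℤ) :
    (u₂ : A) * bas q = L lam q.1 • bas (q.1, q.2 + 1) := by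
  have h1 : (u₂ : A) = bas ((0 : ℤ), (1 : ℤ)) := by rw [hbas]; simp
  rw [h1, bas_mul lam u₁ u₂ hrel bas hbas ((0 : ℤ), (1 : ℤ)) q]
  rw [L_congr lam (by ring : (1:ℤ) * q.1 = q.1)]
  congr 2 <;> ring

lemma lemC0 (r q : ℤ × ℤ) :
    (kosB0 (F := F) (A := A)) (bas0 lam bas (r, q)) = bas r := by
  simp only [bas0, basArr_apply]
  rw [map_smul, kosB0, TensorProduct.lift.tmul, LinearMap.mul_apply',
    bas_mul lam u₁ u₂ hrel bas hbas, smul_smul, L_mul,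
    L_congr lam (by dsimp [E0exp]; ring :
      E0exp ((r, q) : II) + (r.2 - q.2 - 0) * q.1 = 0), L_zero, one_smul]
  congr 1
  dsimp only
  rw [Prod.mk.injEq]
  constructor <;> ring

lemma lemA (r q : ℤ × ℤ) :
    ((TensorProduct.map (LinearMap.mulRight F (u₁ : A)) LinearMap.id -
      TensorProduct.map LinearMap.id (LinearMap.mulLeft F (u₁ : A))) :
        A ⊗[F] A →ₗ[F] A ⊗[F] A)
        (bas1 lam bas (r, q))
      = bas0 lam bas (r, q) - bas0 lam bas (r, (q.1 + 1, q.2)) := by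
  simp only [bas1, bas0, basArr_apply]
  rw [LinearMap.sub_apply, map_smul, map_smul, TensorProduct.map_tmul, TensorProduct.map_tmul]
  simp only [LinearMap.mulRight_apply, LinearMap.mulLeft_apply, LinearMap.id_coe, id_eq]
  rw [bas_mul_u1 lam u₁ u₂ bas hrel hbas, u1_mul_bas lam u₁ u₂ bas hrel hbas]
  simp only [tmul_smul, ← TensorProduct.smul_tmul', smul_smul, L_mul]
  congr 1
  · exact stc lam bas
      (by dsimp [E1exp, E0exp]; try ring)
      (by rw [Prod.mk.injEq]; constructor <;> (try dsimp) <;> try ring)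
      rfl
  · exact stc lam bas
      (by dsimp [E1exp, E0exp]; try ring)
      (by rw [Prod.mk.injEq]; constructor <;> (try dsimp) <;> try ring)
      rfl

lemma lemB (r q : ℤ × ℤ) :
    ((TensorProduct.map (LinearMap.mulRight F (u₂ : A)) LinearMap.id -
      TensorProduct.map LinearMap.id (LinearMap.mulLeft F (u₂ : A))) :
        A ⊗[F] A →ₗ[F] A ⊗[F] A)
        (bas2 lam bas (r, q))
      = bas0 lam bas (r, q) - bas0 lam bas (r, (q.1, q.2 + 1)) := by
  simp only [bas2, bas0, basArr_apply]
  rw [LinearMap.sub_apply, map_smul, map_smul, TensorProduct.map_tmul, TensorProduct.map_tmul]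
  simp only [LinearMap.mulRight_apply, LinearMap.mulLeft_apply, LinearMap.id_coe, id_eq]
  rw [bas_mul_u2 lam u₁ u₂ bas hrel hbas, u2_mul_bas lam u₁ u₂ bas hrel hbas]
  simp only [tmul_smul, ← TensorProduct.smul_tmul', smul_smul, L_mul]
  congr 1
  · exact stc lam bas
      (by dsimp [E2exp, E0exp]; try ring)
      (by rw [Prod.mk.injEq]; constructor <;> (try dsimp) <;> try ring)
      rfl
  · exact stc lam bas
      (by dsimp [E2exp, E0exp]; try ring)
      (by rw [Prod.mk.injEq]; constructor <;> (try dsimp) <;> try ring)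
      rfl

lemma lemC2a (r q : ℤ × ℤ) :
    ((TensorProduct.map ((lam : F) • LinearMap.id) (LinearMap.mulLeft F (u₂ : A)) -
      TensorProduct.map (LinearMap.mulRight F (u₂ : A)) LinearMap.id) :
        A ⊗[F] A →ₗ[F] A ⊗[F] A)
        (basT lam bas (r, q))
      = bas1 lam bas (r, (q.1, q.2 + 1)) - bas1 lam bas (r, q) := by
  simp only [basT, bas1, basArr_apply]
  rw [LinearMap.sub_apply, map_smul, map_smul, TensorProduct.map_tmul, TensorProduct.map_tmul]
  simp only [LinearMap.mulRight_apply, LinearMap.mulLeft_apply, LinearMap.id_coe, id_eq,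
    LinearMap.smul_apply]
  rw [u2_mul_bas lam u₁ u₂ bas hrel hbas, bas_mul_u2 lam u₁ u₂ bas hrel hbas, ← L_one lam]
  simp only [tmul_smul, ← TensorProduct.smul_tmul', smul_smul, L_mul]
  congr 1
  · exact stc lam bas
      (by dsimp [E1exp]; try ring)
      (by rw [Prod.mk.injEq]; constructor <;> (try dsimp) <;> try ring)
      rfl
  · exact stc lam bas
      (by dsimp [E1exp]; try ring)
      (by rw [Prod.mk.injEq]; constructor <;> (try dsimp) <;> try ring)
      rfl

lemma lemC2b (r q : ℤ × ℤ) :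
    ((TensorProduct.map ((lam : F) • LinearMap.mulRight F (u₁ : A)) LinearMap.id -
      TensorProduct.map LinearMap.id (LinearMap.mulLeft F (u₁ : A))) :
        A ⊗[F] A →ₗ[F] A ⊗[F] A)
        (basT lam bas (r, q))
      = bas2 lam bas (r, q) - bas2 lam bas (r, (q.1 + 1, q.2)) := by
  simp only [basT, bas2, basArr_apply]
  rw [LinearMap.sub_apply, map_smul, map_smul, TensorProduct.map_tmul, TensorProduct.map_tmul]
  simp only [LinearMap.mulRight_apply, LinearMap.mulLeft_apply, LinearMap.id_coe, id_eq,
    LinearMap.smul_apply]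
  rw [bas_mul_u1 lam u₁ u₂ bas hrel hbas, u1_mul_bas lam u₁ u₂ bas hrel hbas, ← L_one lam]
  simp only [tmul_smul, ← TensorProduct.smul_tmul', smul_smul, L_mul]
  congr 1
  · exact stc lam bas
      (by dsimp [E1exp, E2exp]; try ring)
      (by rw [Prod.mk.injEq]; constructor <;> (try dsimp) <;> try ring)
      rfl
  · exact stc lam bas
      (by dsimp [E1exp, E2exp]; try ring)
      (by rw [Prod.mk.injEq]; constructor <;> (try dsimp) <;> try ring)
      rfl

end withrel
end bases

section conj

variable (lam : Fˣ) (u₁ u₂ : Aˣ) (bas : Module.Basis (ℤ × ℤ) F A)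

def Phi0 : (A ⊗[F] A) ≃ₗ[F] VV F := (bas0 lam bas).repr
def Phi1 : (A ⊗[F] A) ≃ₗ[F] VV F := (bas1 lam bas).repr
def Phi2 : (A ⊗[F] A) ≃ₗ[F] VV F := (bas2 lam bas).repr
def PhiT : (A ⊗[F] A) ≃ₗ[F] VV F := (basT lam bas).repr
def PP : ((A ⊗[F] A) × (A ⊗[F] A)) ≃ₗ[F] (VV F × VV F) :=
  (Phi1 lam bas).prodCongr (Phi2 lam bas)

section withrel2

variable (hrel : (u₂ : A) * u₁ = (lam : F) • ((u₁ : A) * u₂))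
  (hbas : ∀ p : ℤ × ℤ, bas p = ((u₁ ^ p.1 * u₂ ^ p.2 : Aˣ) : A))

include hrel hbas

lemma E1eq : (kosB0 (F := F) (A := A))
    = bas.repr.symm.toLinearMap ∘ₗ (Emap F) ∘ₗ (Phi0 lam bas).toLinearMap := by
  apply Module.Basis.ext (bas0 lam bas)
  intro i
  obtain ⟨r, q⟩ := i
  rw [lemC0 lam u₁ u₂ bas hrel hbas r q]
  simp only [LinearMap.comp_apply, LinearEquiv.coe_coe, Phi0, Module.Basis.repr_self]
  rw [Emap_single]
  exact (bas.repr_symm_single_one r).symm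

lemma E2eq : (kosB1 (F := F) ((u₁ : A)) ((u₂ : A)))
    = (Phi0 lam bas).symm.toLinearMap ∘ₗ (d1m F) ∘ₗ (PP lam bas).toLinearMap := by
  apply LinearMap.prod_ext
  · apply Module.Basis.ext (bas1 lam bas)
    intro i
    obtain ⟨r, q⟩ := i
    simp only [LinearMap.comp_apply, LinearMap.inl_apply, LinearEquiv.coe_coe, PP,
      LinearEquiv.prodCongr_apply, map_zero, kosB1, LinearMap.coprod_apply, add_zero,
      Phi1, Module.Basis.repr_self, Phi2]
    rw [lemA lam u₁ u₂ bas hrel hbas r q]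
    have hd : (d1m F) ((Finsupp.single ((r, q) : II) (1:F)), (0 : VV F))
        = Finsupp.single ((r, q) : II) 1 - Finsupp.single ((r, (q.1 + 1, q.2)) : II) 1 := by
      simp only [d1m, LinearMap.coprod_apply, LinearMap.sub_apply, LinearMap.id_apply,
        map_zero, add_zero, sub_zero]
      rw [T1_single]
    rw [hd, map_sub, Phi0]
    rw [Module.Basis.repr_symm_single_one, Module.Basis.repr_symm_single_one]
  · apply Module.Basis.ext (bas2 lam bas)
    intro i
    obtain ⟨r, q⟩ := i
    simp only [LinearMap.comp_apply, LinearMap.inr_apply, LinearEquiv.coe_coe, PP,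
      LinearEquiv.prodCongr_apply, map_zero, kosB1, LinearMap.coprod_apply, zero_add,
      Phi1, Module.Basis.repr_self, Phi2]
    rw [lemB lam u₁ u₂ bas hrel hbas r q]
    have hd : (d1m F) ((0 : VV F), (Finsupp.single ((r, q) : II) (1:F)))
        = Finsupp.single ((r, q) : II) 1 - Finsupp.single ((r, (q.1, q.2 + 1)) : II) 1 := by
      simp only [d1m, LinearMap.coprod_apply, LinearMap.sub_apply, LinearMap.id_apply,
        map_zero, zero_add, sub_zero, zero_sub]
      rw [T2_single]
    rw [hd, map_sub, Phi0]
    rw [Module.Basis.repr_symm_single_one, Module.Basis.repr_symm_single_one]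

lemma E3eq : (kosB2 (F := F) ((lam : F)) ((u₁ : A)) ((u₂ : A)))
    = (PP lam bas).symm.toLinearMap ∘ₗ (d2m F) ∘ₗ (PhiT lam bas).toLinearMap := by
  apply Module.Basis.ext (basT lam bas)
  intro i
  obtain ⟨r, q⟩ := i
  simp only [LinearMap.comp_apply, LinearEquiv.coe_coe, PhiT, Module.Basis.repr_self, kosB2,
    LinearMap.prod_apply, Function.prod_apply]
  rw [lemC2a lam u₁ u₂ bas hrel hbas r q, lemC2b lam u₁ u₂ bas hrel hbas r q]
  have hd : (d2m F) (Finsupp.single ((r, q) : II) (1:F))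
      = (Finsupp.single ((r, (q.1, q.2 + 1)) : II) 1 - Finsupp.single ((r, q) : II) 1,
         Finsupp.single ((r, q) : II) 1 - Finsupp.single ((r, (q.1 + 1, q.2)) : II) 1) := by
    simp only [d2m, LinearMap.prod_apply, Function.prod_apply, LinearMap.sub_apply, LinearMap.id_apply]
    rw [T1_single, T2_single]
  rw [hd, PP, LinearEquiv.prodCongr_symm, LinearEquiv.prodCongr_apply]
  dsimp only
  rw [map_sub, map_sub, Phi1, Phi2,
    Module.Basis.repr_symm_single_one, Module.Basis.repr_symm_single_one,
    Module.Basis.repr_symm_single_one, Module.Basis.repr_symm_single_one]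

theorem main :
    Function.Injective (kosB2 (lam : F) (u₁ : A) (u₂ : A)) ∧
    LinearMap.range (kosB2 (lam : F) (u₁ : A) (u₂ : A)) =
      LinearMap.ker (kosB1 (F := F) (u₁ : A) (u₂ : A)) ∧
    LinearMap.range (kosB1 (F := F) (u₁ : A) (u₂ : A)) =
      LinearMap.ker (kosB0 (F := F) (A := A)) ∧
    Function.Surjective (kosB0 (F := F) (A := A)) ∧
    (kosB1 (F := F) (u₁ : A) (u₂ : A)).comp (kosB2 (lam : F) (u₁ : A) (u₂ : A)) = 0 ∧
    (kosB0 (F := F) (A := A)).comp (kosB1 (F := F) (u₁ : A) (u₂ : A)) = 0 := by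
  have e1 := E1eq lam u₁ u₂ bas hrel hbas
  have e2 := E2eq lam u₁ u₂ bas hrel hbas
  have e3 := E3eq lam u₁ u₂ bas hrel hbas
  have h5 : (kosB1 (F := F) (u₁ : A) (u₂ : A)).comp (kosB2 (lam : F) (u₁ : A) (u₂ : A)) = 0 := by
    rw [e2, e3]
    apply LinearMap.ext
    intro z
    simp only [LinearMap.comp_apply, LinearMap.zero_apply, LinearEquiv.coe_coe,
      LinearEquiv.apply_symm_apply]
    have hm := LinearMap.congr_fun (M5 F) ((PhiT lam bas) z)
    simp only [LinearMap.comp_apply, LinearMap.zero_apply] at hm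
    rw [hm, map_zero]
  have h6 : (kosB0 (F := F) (A := A)).comp (kosB1 (F := F) (u₁ : A) (u₂ : A)) = 0 := by
    rw [e1, e2]
    apply LinearMap.ext
    intro z
    simp only [LinearMap.comp_apply, LinearMap.zero_apply, LinearEquiv.coe_coe,
      LinearEquiv.apply_symm_apply]
    have hm := LinearMap.congr_fun (M6 F) ((PP lam bas) z)
    simp only [LinearMap.comp_apply, LinearMap.zero_apply] at hm
    rw [hm, map_zero]
  refine ⟨?_, ?_, ?_, ?_, h5, h6⟩
  · -- injectivity of kosB2
    have hd2 : Function.Injective (d2m F) := by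
      intro x y hxy
      have hx := LinearMap.congr_fun (M4 F) x
      have hy := LinearMap.congr_fun (M4 F) y
      simp only [LinearMap.comp_apply, LinearMap.id_apply] at hx hy
      rw [← hx, ← hy, hxy]
    rw [e3]
    simp only [LinearMap.coe_comp, LinearEquiv.coe_coe]
    exact ((PP lam bas).symm.injective.comp hd2).comp (PhiT lam bas).injective
  · -- range kosB2 = ker kosB1
    apply le_antisymm
    · exact LinearMap.range_le_ker_iff.mpr h5
    · intro x hx
      have hx0 : (kosB1 (F := F) (u₁ : A) (u₂ : A)) x = 0 := LinearMap.mem_ker.mp hx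
      rw [e2] at hx0
      simp only [LinearMap.comp_apply, LinearEquiv.coe_coe] at hx0
      have hker : (d1m F) ((PP lam bas) x) = 0 := by
        have := (LinearEquiv.map_eq_zero_iff (Phi0 lam bas).symm).mp hx0
        exact this
      have hid := LinearMap.congr_fun (M3 F) ((PP lam bas) x)
      simp only [LinearMap.comp_apply, LinearMap.add_apply, LinearMap.id_apply] at hid
      rw [hker, map_zero, zero_add] at hid
      refine ⟨(PhiT lam bas).symm ((h1m F) ((PP lam bas) x)), ?_⟩
      rw [e3]
      simp only [LinearMap.comp_apply, LinearEquiv.coe_coe, LinearEquiv.apply_symm_apply]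
      rw [hid]
      exact (PP lam bas).symm_apply_apply x
  · -- range kosB1 = ker kosB0
    apply le_antisymm
    · exact LinearMap.range_le_ker_iff.mpr h6
    · intro x hx
      have hx0 : (kosB0 (F := F) (A := A)) x = 0 := LinearMap.mem_ker.mp hx
      rw [e1] at hx0
      simp only [LinearMap.comp_apply, LinearEquiv.coe_coe] at hx0
      have hker : (Emap F) ((Phi0 lam bas) x) = 0 :=
        (LinearEquiv.map_eq_zero_iff bas.repr.symm).mp hx0
      have hid := LinearMap.congr_fun (M2 F) ((Phi0 lam bas) x)
      simp only [LinearMap.comp_apply, LinearMap.add_apply, LinearMap.id_apply] at hid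
      rw [hker, map_zero, zero_add] at hid
      refine ⟨(PP lam bas).symm ((h0m F) ((Phi0 lam bas) x)), ?_⟩
      rw [e2]
      simp only [LinearMap.comp_apply, LinearEquiv.coe_coe, LinearEquiv.apply_symm_apply]
      rw [hid]
      exact (Phi0 lam bas).symm_apply_apply x
  · -- surjectivity of kosB0
    intro a
    refine ⟨(Phi0 lam bas).symm ((sigma F) (bas.repr a)), ?_⟩
    rw [e1]
    simp only [LinearMap.comp_apply, LinearEquiv.coe_coe, LinearEquiv.apply_symm_apply]
    have hm := LinearMap.congr_fun (M1 F) (bas.repr a)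
    simp only [LinearMap.comp_apply, LinearMap.id_apply] at hm
    rw [hm]
    exact bas.repr.symm_apply_apply a

end withrel2
end conj

end Stmt14

/-- let `A` be the noncommutative torus over a field `F`, i.e. the
twisted group algebra `F[ℤ², c]` with invertible generators `U₁, U₂` satisfying
`U₂U₁ = λ U₁U₂` (`λ` a unit of `F`) and basis `{U₁^m U₂^n}_{(m,n) ∈ ℤ²}`.
Then the Koszul complex `0 → A⊗A → (A⊗A) ⊕ (A⊗A) → A⊗A → A → 0` with the maps
`b₂, b₁, b₀` above is exact: it is a free `A`-bimodule resolution of `A`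
of length 2. -/
theorem stmt14 (F : Type*) [Field F] (A : Type*) [Ring A] [Algebra F A]
    (lam : Fˣ) (u₁ u₂ : Aˣ)
    (hrel : (u₂ : A) * u₁ = (lam : F) • ((u₁ : A) * u₂))
    (bas : Module.Basis (ℤ × ℤ) F A)
    (hbas : ∀ p : ℤ × ℤ, bas p = ((u₁ ^ p.1 * u₂ ^ p.2 : Aˣ) : A)) :
    Function.Injective (kosB2 (lam : F) (u₁ : A) (u₂ : A)) ∧
    LinearMap.range (kosB2 (lam : F) (u₁ : A) (u₂ : A)) =
      LinearMap.ker (kosB1 (F := F) (u₁ : A) (u₂ : A)) ∧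
    LinearMap.range (kosB1 (F := F) (u₁ : A) (u₂ : A)) =
      LinearMap.ker (kosB0 (F := F) (A := A)) ∧
    Function.Surjective (kosB0 (F := F) (A := A)) ∧
    (kosB1 (F := F) (u₁ : A) (u₂ : A)).comp (kosB2 (lam : F) (u₁ : A) (u₂ : A)) = 0 ∧
    (kosB0 (F := F) (A := A)).comp (kosB1 (F := F) (u₁ : A) (u₂ : A)) = 0 := by
  exact Stmt14.main lam u₁ u₂ bas hrel hbas

end
end

section
/- Let V be a complete discrete valuation ring with valuation ν, and let G be a finitely generated group with word length l and distinguished bounded generating sets F_n = {g : l(g) ≤ n}. For the group algebra V[G] with bornology generated by the V[F_n], the linear-growth submodules M_n = Σ_{j=0}^∞ π^j V[F_n]^{j+1} satisfy: M_n = { Σ_g x_g δ_g ∈ V[G] : ν(x_g) + 1 ≥ l(g)/n for all g }. -/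
open Pointwise

/-- The bounded submodule `V[F_n]` of the group algebra: elements supported on
the ball `F_n = {g | l g ≤ n}`. -/
noncomputable def ballSubmodule (V : Type*) [CommRing V] {G : Type*} [Group G]
    (l : G → ℕ) (n : ℕ) : Submodule V (MonoidAlgebra V G) :=
  MonoidAlgebra.supported V V {g : G | l g ≤ n}

/-- The linear-growth submodule `M_n = Σ_{j=0}^∞ π^j V[F_n]^{j+1}`. -/
noncomputable def linGrowth (V : Type*) [CommRing V] {G : Type*} [Group G]
    (ϖ : V) (l : G → ℕ) (n : ℕ) : Submodule V (MonoidAlgebra V G) :=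
  ⨆ j : ℕ,
    Submodule.map
      ((ϖ ^ j) • (LinearMap.id : MonoidAlgebra V G →ₗ[V] MonoidAlgebra V G))
      ((ballSubmodule V l n) ^ (j + 1))

lemma ball_pow_le (V : Type*) [CommRing V] {G : Type*} [Group G]
    (l : G → ℕ) (hsub : ∀ g h : G, l (g * h) ≤ l g + l h) (n : ℕ) (k : ℕ) :
    (ballSubmodule V l n) ^ (k + 1) ≤
      MonoidAlgebra.supported V V {g : G | l g ≤ n * (k + 1)} := by
  classical
  induction k with
  | zero =>
    rw [pow_one]
    simpa [ballSubmodule] using le_refl _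
  | succ k ih =>
    rw [pow_succ]
    refine Submodule.mul_le.2 fun a ha b hb => ?_
    rw [MonoidAlgebra.mem_supported] at *
    refine subset_trans (Finset.coe_subset.2 (MonoidAlgebra.support_coeff_mul_subset a b)) ?_
    intro g hg
    rw [Finset.coe_mul] at hg
    obtain ⟨u, hu, v, hv, rfl⟩ := hg
    have h1 := ih ha hu
    have h2 := (hb : _) hv
    simp only [Set.mem_setOf_eq] at *
    calc l (u * v) ≤ l u + l v := hsub u v
      _ ≤ n * (k + 1) + n := add_le_add h1 h2
      _ = n * (k + 1 + 1) := by ring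

lemma list_prod_mem_pow {V A : Type*} [CommRing V] [Ring A] [Algebra V A]
    {p : Submodule V A} : ∀ (L : List A), (∀ a ∈ L, a ∈ p) → L.prod ∈ p ^ L.length
  | [], _ => by
    rw [List.prod_nil, List.length_nil, pow_zero]
    exact Submodule.one_le.mp le_rfl
  | a :: t, h => by
    rw [List.prod_cons, List.length_cons, pow_succ']
    exact Submodule.mul_mem_mul (h a (by simp))
      (list_prod_mem_pow t fun b hb => h b (List.mem_cons_of_mem _ hb))

/-- for a complete discrete valuation ring `V` with uniformiser `π`
and a finitely generated group `G` with word length `l` (with balls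
`F_n = {g | l g ≤ n}`, subadditive length, and the geodesic property that any
`g` with `l g ≤ n(k+1)` is a product of `k+1` elements of `F_n`), the submodule
`M_n = Σ_j π^j V[F_n]^{j+1}` of `V[G]` equals
`{ Σ_g x_g δ_g : ν(x_g) + 1 ≥ l(g)/n }`, i.e. the set of `x` such that for every
`g` there is `j` with `π^j ∣ x_g` and `n·(j+1) ≥ l(g)`. -/
theorem stmt16 (V : Type*) [CommRing V] [IsDomain V] [IsDiscreteValuationRing V]
    (ϖ : V) (hϖ : Irreducible ϖ)
    (G : Type*) [Group G] (l : G → ℕ)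
    (hone : l 1 = 0)
    (hsub : ∀ g h : G, l (g * h) ≤ l g + l h)
    (n : ℕ) (hn : 0 < n)
    (hgeo : ∀ (g : G) (k : ℕ), l g ≤ n * (k + 1) →
      ∃ gs : Fin (k + 1) → G, (∀ i, l (gs i) ≤ n) ∧ g = (List.ofFn gs).prod) :
    (linGrowth V ϖ l n : Set (MonoidAlgebra V G)) =
      {x : MonoidAlgebra V G | ∀ g : G, ∃ j : ℕ, ϖ ^ j ∣ x.coeff g ∧ l g ≤ n * (j + 1)} := by
  classical
  -- the RHS is a submodule
  have hjz : ∀ g : G, l g ≤ n * (l g + 1) := fun g =>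
    le_trans (Nat.le_succ_of_le le_rfl) (Nat.le_mul_of_pos_left _ hn)
  set S : Submodule V (MonoidAlgebra V G) :=
    { carrier := {x : MonoidAlgebra V G | ∀ g : G, ∃ j : ℕ, ϖ ^ j ∣ x.coeff g ∧ l g ≤ n * (j + 1)}
      zero_mem' := fun g => ⟨l g, by simp, hjz g⟩
      add_mem' := by
        rintro x y hx hy g
        obtain ⟨j1, hd1, hl1⟩ := hx g
        obtain ⟨j2, hd2, hl2⟩ := hy g
        refine ⟨min j1 j2, ?_, ?_⟩
        · have : (x + y).coeff g = x.coeff g + y.coeff g := rfl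
          rw [this]
          exact dvd_add (dvd_trans (pow_dvd_pow ϖ (min_le_left _ _)) hd1)
            (dvd_trans (pow_dvd_pow ϖ (min_le_right _ _)) hd2)
        · rcases min_cases j1 j2 with ⟨h, _⟩ | ⟨h, _⟩ <;> rw [h] <;> assumption
      smul_mem' := by
        rintro c x hx g
        obtain ⟨j, hd, hl⟩ := hx g
        exact ⟨j, by simpa using hd.mul_left c, hl⟩ } with hS
  apply le_antisymm
  · -- linGrowth ≤ S
    show linGrowth V ϖ l n ≤ S
    refine iSup_le fun j => ?_
    rintro _ ⟨y, hy, rfl⟩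
    intro g
    by_cases hyg : y.coeff g = 0
    · refine ⟨l g, ?_, hjz g⟩
      rw [show ((ϖ ^ j • (LinearMap.id : MonoidAlgebra V G →ₗ[V] MonoidAlgebra V G)) y).coeff g
          = ϖ ^ j * y.coeff g from rfl, hyg, mul_zero]
      exact dvd_zero _
    · refine ⟨j, ?_, ?_⟩
      · have : ((ϖ ^ j • LinearMap.id : MonoidAlgebra V G →ₗ[V] MonoidAlgebra V G) y).coeff g
            = ϖ ^ j * y.coeff g := rfl
        rw [this]
        exact Dvd.intro _ rfl
      · have := ball_pow_le V l hsub n j hy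
        rw [MonoidAlgebra.mem_supported] at this
        exact this (Finsupp.mem_support_iff.2 hyg)
  · -- S ≤ linGrowth
    show S ≤ linGrowth V ϖ l n
    intro x hx
    have hrw : x = x.coeff.sum fun g c => MonoidAlgebra.single g c := (MonoidAlgebra.sum_coeff_single x).symm
    rw [hrw]
    refine Submodule.sum_mem _ fun g hg => ?_
    obtain ⟨j, ⟨c, hc⟩, hl⟩ := hx g
    obtain ⟨gs, hgs, hprod⟩ := hgeo g j hl
    have hball : (MonoidAlgebra.single g (1 : V)) ∈ (ballSubmodule V l n) ^ (j + 1) := by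
      have heq : (MonoidAlgebra.single g (1 : V)) =
          ((List.ofFn gs).map (fun h => MonoidAlgebra.single h (1 : V))).prod := by
        have hmap : ((List.ofFn gs).map (fun h => MonoidAlgebra.single h (1 : V)))
            = (List.ofFn gs).map (MonoidAlgebra.of V G) := by
          congr 1
        rw [hmap, ← map_list_prod, ← hprod, MonoidAlgebra.of_apply]
      rw [heq]
      have hlen : ((List.ofFn gs).map (fun h => MonoidAlgebra.single h (1 : V))).length
          = j + 1 := by simp
      have hmem := list_prod_mem_pow (p := ballSubmodule V l n)
        ((List.ofFn gs).map (fun h => MonoidAlgebra.single h (1 : V))) ?mem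
      · rwa [hlen] at hmem
      intro a ha
      simp only [List.mem_map, List.mem_ofFn] at ha
      obtain ⟨h, ⟨i, rfl⟩, rfl⟩ := ha
      rw [ballSubmodule, MonoidAlgebra.mem_supported]
      intro u hu
      have := Finsupp.support_single_subset hu
      simp only [Finset.mem_singleton] at this
      subst this
      exact hgs i
    have hmem : MonoidAlgebra.single g (x.coeff g) ∈
        Submodule.map ((ϖ ^ j) • (LinearMap.id : MonoidAlgebra V G →ₗ[V] MonoidAlgebra V G))
          ((ballSubmodule V l n) ^ (j + 1)) := by
      refine ⟨c • MonoidAlgebra.single g (1 : V), Submodule.smul_mem _ c hball, ?_⟩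
      show ϖ ^ j • (c • MonoidAlgebra.single g (1 : V)) = _
      rw [smul_smul, MonoidAlgebra.smul_single, smul_eq_mul, mul_one, hc]
    exact le_iSup (fun j => Submodule.map
      ((ϖ ^ j) • (LinearMap.id : MonoidAlgebra V G →ₗ[V] MonoidAlgebra V G))
      ((ballSubmodule V l n) ^ (j + 1))) j hmem
end
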